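/- Let G be a finite graph and for every vertex v let W_2(G, v) denote the number of walks of length two in G starting at v (equivalently, W_2(G, v) = Σ_{u ~ v} d_G(u)). Then the largest eigenvalue of the adjacency matrix of G satisfies λ1(G) ≤ √(max_v W_2(G, v)). -/

import Mathlib

open MeasureTheory Filter Asymptotics

noncomputable section

/-- The `n`-dimensional cube graph `Q^n`: vertices are vectors in `{0,1}^n`,
two vertices adjacent iff they differ in exactly one coordinate. -/
def cubeGraph (n : ℕ) : SimpleGraph (Fin n → Bool) where
  Adj x y := hammingDist x y = 1
  symm := ⟨fun x y h => by show hammingDist y x = 1; rwa [hammingDist_comm]⟩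
  loopless := ⟨fun x h => by simp [hammingDist_self] at h⟩

/-- The subgraph of the `n`-cube determined by a configuration `ω` of edge indicators:
an edge of `Q^n` is kept iff its indicator is `true`. -/
def randCube (n : ℕ) (ω : Sym2 (Fin n → Bool) → Bool) : SimpleGraph (Fin n → Bool) where
  Adj x y := (cubeGraph n).Adj x y ∧ ω s(x, y) = true
  symm := ⟨fun x y h => ⟨(cubeGraph n).adj_symm h.1, by rw [Sym2.eq_swap]; exact h.2⟩⟩
  loopless := ⟨fun x h => (cubeGraph n).irrefl h.1⟩

/-- The product Bernoulli(p) measure on edge-indicator configurations: each potential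
edge appears independently with probability `p`. -/
def cubeMeasure (n : ℕ) (p : ℝ) : Measure (Sym2 (Fin n → Bool) → Bool) :=
  Measure.pi fun _ => (PMF.bernoulli (min (Real.toNNReal p) 1) (min_le_right _ _)).toMeasure

/-- Degree of a vertex. -/
def deg {V : Type*} [Fintype V] (G : SimpleGraph V) (v : V) : ℕ := (G.neighborSet v).ncard

/-- Maximum degree. -/
def maxDeg {V : Type*} [Fintype V] (G : SimpleGraph V) : ℕ := ⨆ v, deg G v

/-- Adjacency matrix over ℝ. -/
def adjMat {V : Type*} [Fintype V] (G : SimpleGraph V) : Matrix V V ℝ :=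
  @SimpleGraph.adjMatrix ℝ V G (Classical.decRel _) _ _

theorem adjMat_isHermitian {V : Type*} [Fintype V] (G : SimpleGraph V) :
    (adjMat G).IsHermitian := by
  apply Matrix.ext
  intro i j
  simp only [adjMat, Matrix.conjTranspose_apply, SimpleGraph.adjMatrix_apply, star_trivial]
  by_cases h : G.Adj i j
  · rw [if_pos h, if_pos (G.adj_symm h)]
  · rw [if_neg h, if_neg (fun hji => h (G.adj_symm hji))]

/-- The largest eigenvalue of the adjacency matrix of `G`. -/
def lambda1 {V : Type*} [Fintype V] [DecidableEq V] (G : SimpleGraph V) : ℝ :=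
  ⨆ v, (adjMat_isHermitian G).eigenvalues v

/-- `κ(n) = max { k : 2^n C(n,k) p^k (1-p)^{n-k} ≥ 1 }`. -/
def kappa (n : ℕ) (p : ℝ) : ℕ :=
  sSup {k : ℕ | 1 ≤ (2 : ℝ) ^ n * n.choose k * p ^ k * (1 - p) ^ (n - k)}

open Classical in
/-- The number of walks of length two starting at `v`: `W₂(G,v) = Σ_{u ~ v} d(u)`. -/
def walk2 {V : Type*} [Fintype V] (G : SimpleGraph V) (v : V) : ℕ :=
  ∑ u ∈ Finset.univ.filter (fun u => G.Adj v u), deg G u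

/-! If `μ` is an eigenvalue of the adjacency matrix `A`, then `μ²` is an eigenvalue of `A²`.
The entries of `A²` are nonnegative and its row sums are `(A² 𝟙)_v = Σ_{u ~ v} d(u) = W₂(G, v)`,
so Gershgorin's circle theorem gives `μ² ≤ max_v W₂(G, v)`. -/

open Matrix

theorem Matrix.exists_norm_le_sum_norm_row_of_mem_spectrum {n K : Type*} [Fintype n]
    [DecidableEq n] [NormedField K] {A : Matrix n n K} {μ : K} (hμ : μ ∈ spectrum K A) :
    ∃ k, ‖μ‖ ≤ ∑ j, ‖A k j‖ := by
  rw [← spectrum_toLin', ← Module.End.hasEigenvalue_iff_mem_spectrum] at hμ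
  obtain ⟨k, hk⟩ := eigenvalue_mem_ball hμ
  refine ⟨k, ?_⟩
  rw [← Finset.add_sum_erase _ _ (Finset.mem_univ k)]
  calc ‖μ‖ ≤ ‖A k k‖ + ‖μ - A k k‖ := norm_le_norm_add_norm_sub' ..
    _ ≤ _ := by gcongr; rwa [← dist_eq_norm]

section Graph

variable {V : Type*} [Fintype V] (G : SimpleGraph V)

theorem deg_eq_degree [DecidableRel G.Adj] (v : V) : deg G v = G.degree v := by
  rw [deg, Set.ncard_eq_toFinset_card', Set.toFinset_card, SimpleGraph.card_neighborSet_eq_degree]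

theorem adjMat_mulVec_one : adjMat G *ᵥ 1 = fun v => (deg G v : ℝ) := by
  classical
  ext v
  simp [adjMat, deg_eq_degree]

theorem adjMat_mul_self_mulVec_one : (adjMat G * adjMat G) *ᵥ 1 = fun v => (walk2 G v : ℝ) := by
  classical
  ext v
  rw [← mulVec_mulVec, adjMat_mulVec_one, walk2, adjMat, SimpleGraph.adjMatrix_mulVec_apply,
    SimpleGraph.neighborFinset_eq_filter]
  push_cast
  rfl

theorem adjMat_nonneg (u w : V) : 0 ≤ adjMat G u w := by
  rw [adjMat, SimpleGraph.adjMatrix_apply]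
  split <;> norm_num

theorem sum_norm_adjMat_mul_self_row (v : V) :
    ∑ j, ‖(adjMat G * adjMat G) v j‖ = walk2 G v := by
  have hnonneg (j : V) : 0 ≤ (adjMat G * adjMat G) v j :=
    Finset.sum_nonneg fun u _ => mul_nonneg (adjMat_nonneg G v u) (adjMat_nonneg G u j)
  simp_rw [Real.norm_of_nonneg (hnonneg _)]
  simpa [mulVec, dotProduct] using congrFun (adjMat_mul_self_mulVec_one G) v

end Graph

/-- `λ1(G) ≤ √(max_v W₂(G,v))`. -/
theorem lambda1_le_sqrt_max_walk2 {V : Type*} [Fintype V] [DecidableEq V]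
    (G : SimpleGraph V) :
    lambda1 G ≤ Real.sqrt ((⨆ v, walk2 G v : ℕ) : ℝ) := by
  refine Real.iSup_le (fun j => ?_) (Real.sqrt_nonneg _)
  set μ := (adjMat_isHermitian G).eigenvalues j
  have hμ2 : μ ^ 2 ∈ spectrum ℝ (adjMat G * adjMat G) := by
    rw [← sq]
    exact spectrum.pow_mem_pow _ 2 ((adjMat_isHermitian G).eigenvalues_mem_spectrum_real j)
  obtain ⟨k, hk⟩ := exists_norm_le_sum_norm_row_of_mem_spectrum hμ2
  rw [sum_norm_adjMat_mul_self_row, Real.norm_of_nonneg (sq_nonneg μ)] at hk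
  have hk_le_max : walk2 G k ≤ ⨆ v, walk2 G v := le_ciSup (Set.finite_range _).bddAbove k
  refine (le_abs_self μ).trans (Real.abs_le_sqrt (hk.trans ?_))
  exact_mod_cast hk_le_max
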